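/- Consider a parallel-link network with demand r where the system-optimal flow f is unique and all latencies are strictly increasing. Define a link e to be zero reduced cost if lₑ(fₑ) = min_{e'} l_{e'}(f_{e'}) and cₑ'(fₑ) = min_{e'} c_{e'}'(f_{e'}). Then the maximal volume of self-interested demand compatible with system optimum equals ∑_{e zero reduced cost} fₑ. -/

import Mathlib

/-!
Links carrying self-interested flow must have minimal latency, and every link carrying flow
at the system optimum has minimal marginal cost: moving mass `t` from such a link `e` to any
link `e'` keeps the flow feasible, so the one-sided derivative `c'ₑ'(fₑ') - c'ₑ(fₑ)` of the
total cost in that direction is nonnegative. Hence selfish flow lives on zero reduced cost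
links and is bounded by `f` there; routing exactly `f` selfishly on those links attains the
bound.
-/

open Filter Topology

section FirstOrderCondition

variable {E : Type*} [Fintype E]

def feasibleFlows (E : Type*) [Fintype E] (r : ℝ) : Set (E → ℝ) :=
  {h | (∀ e, 0 ≤ h e) ∧ ∑ e, h e = r}

lemma hasFDerivAt_sum_apply {c : E → ℝ → ℝ} {c' : E → ℝ} {f : E → ℝ}
    (hc : ∀ a, HasDerivAt (c a) (c' a) (f a)) :
    HasFDerivAt (fun h => ∑ a, c a (h a))
      (∑ a, c' a • ContinuousLinearMap.proj (R := ℝ) (φ := fun _ : E => ℝ) a) f :=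
  HasFDerivAt.fun_sum fun a _ =>
    (hc a).comp_hasFDerivAt f (hasFDerivAt_apply (𝕜 := ℝ) (F' := fun _ : E => ℝ) a f)

variable [DecidableEq E]

lemma add_smul_transfer_mem_feasibleFlows {r : ℝ} {f : E → ℝ} (hf : f ∈ feasibleFlows E r)
    {e e' : E} (hne : e ≠ e') {t : ℝ} (ht0 : 0 ≤ t) (hte : t ≤ f e) :
    f + t • (Pi.single e' 1 - Pi.single e 1) ∈ feasibleFlows E r := by
  refine ⟨fun a => ?_, ?_⟩
  · rcases eq_or_ne a e with rfl | hae
    · simp [hne]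
      linarith
    · have : (0 : ℝ) ≤ (Pi.single e' 1 : E → ℝ) a := by
        rw [Pi.single_apply]; split_ifs <;> norm_num
      simp only [Pi.add_apply, Pi.smul_apply, Pi.sub_apply, Pi.single_eq_of_ne hae, smul_eq_mul,
        sub_zero]
      exact add_nonneg (hf.1 a) (mul_nonneg ht0 this)
  · simp [Finset.sum_add_distrib, ← Finset.mul_sum, hf.2]

lemma transfer_mem_posTangentConeAt {r : ℝ} {f : E → ℝ} (hf : f ∈ feasibleFlows E r)
    {e e' : E} (hne : e ≠ e') (he : 0 < f e) :
    Pi.single e' 1 - Pi.single e 1 ∈ posTangentConeAt (feasibleFlows E r) f := by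
  refine mem_posTangentConeAt_of_frequently_mem (Eventually.frequently ?_)
  filter_upwards [Ioo_mem_nhdsGT he] with t ht
  exact add_smul_transfer_mem_feasibleFlows hf hne ht.1.le ht.2.le

lemma deriv_le_of_isMinOn_feasibleFlows {c : E → ℝ → ℝ} {c' : E → ℝ} {r : ℝ} {f : E → ℝ}
    (hc : ∀ a, HasDerivAt (c a) (c' a) (f a)) (hf : f ∈ feasibleFlows E r)
    (hmin : IsMinOn (fun h => ∑ a, c a (h a)) (feasibleFlows E r) f)
    {e : E} (he : 0 < f e) (e' : E) : c' e ≤ c' e' := by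
  rcases eq_or_ne e e' with rfl | hne
  · rfl
  have := hmin.localize.hasFDerivWithinAt_nonneg (hasFDerivAt_sum_apply hc).hasFDerivWithinAt
    (transfer_mem_posTangentConeAt hf hne he)
  simpa [Pi.single_apply, mul_sub, Finset.sum_sub_distrib] using this

end FirstOrderCondition

lemma hasDerivAt_mul_self {l : ℝ → ℝ} {x : ℝ} (hl : DifferentiableAt ℝ l x) :
    HasDerivAt (fun y => l y * y) (l x + x * deriv l x) x :=
  (hl.hasDerivAt.mul (hasDerivAt_id' x)).congr_deriv (by ring)

theorem max_selfish_volume_eq_zero_reduced_cost_flow_general {E : Type*} [Fintype E]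
    (l : E → ℝ → ℝ)
    (hldiff : ∀ e, Differentiable ℝ (l e))
    (r : ℝ)
    (f : E → ℝ) (hf0 : ∀ e, 0 ≤ f e) (hfr : ∑ e, f e = r)
    (hfSO : ∀ h : E → ℝ, (∀ e, 0 ≤ h e) → ∑ e, h e = r →
      ∑ e, l e (f e) * f e ≤ ∑ e, l e (h e) * h e) :
    IsGreatest
      {u : ℝ | ∃ fUE fC : E → ℝ,
        (∀ e, 0 ≤ fUE e) ∧ (∀ e, 0 ≤ fC e) ∧
        (∀ e, fUE e + fC e = f e) ∧
        (∑ e, fUE e) = u ∧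
        -- self-interested flow only on minimal-latency links
        (∀ e, 0 < fUE e → ∀ e', l e (f e) ≤ l e' (f e'))}
      (∑ e ∈ Finset.univ.filter (fun e =>
          (∀ e', l e (f e) ≤ l e' (f e')) ∧
          (∀ e', l e (f e) + f e * deriv (l e) (f e)
            ≤ l e' (f e') + f e' * deriv (l e') (f e'))),
        f e) := by
  classical
  set P : E → Prop := fun e =>
      (∀ e', l e (f e) ≤ l e' (f e')) ∧
      (∀ e', l e (f e) + f e * deriv (l e) (f e) ≤ l e' (f e') + f e' * deriv (l e') (f e'))
  have hmarginal (e : E) (he : 0 < f e) (e' : E) :=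
    deriv_le_of_isMinOn_feasibleFlows (fun a => hasDerivAt_mul_self (hldiff a (f a)))
      ⟨hf0, hfr⟩ (fun h hh => hfSO h hh.1 hh.2) he e'
  refine ⟨⟨fun e => if P e then f e else 0, fun e => if P e then 0 else f e,
    fun e => ite_nonneg (hf0 e) le_rfl, fun e => ite_nonneg le_rfl (hf0 e),
    fun e => by dsimp only; split_ifs <;> ring, (Finset.sum_filter _ _).symm, fun e he => ?_⟩, ?_⟩
  · by_cases hP : P e
    · exact hP.1
    · simp [hP] at he
  · rintro u ⟨fUE, fC, hUE0, hC0, hsplit, rfl, hlatency⟩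
    have hUE_le (e : E) : fUE e ≤ f e := by linarith [hC0 e, hsplit e]
    rw [← Finset.sum_filter_of_ne (p := P) fun e _ hne =>
      have hpos := (hUE0 e).lt_of_ne' hne
      ⟨hlatency e hpos, hmarginal e (hpos.trans_le (hUE_le e))⟩]
    exact Finset.sum_le_sum fun e _ => hUE_le e

/-- With a unique system-optimal flow `f` and strictly increasing latencies, the
maximal volume of self-interested demand compatible with system optimum equals
the total SO flow on zero reduced cost links (minimal latency and minimal
marginal cost at SO). -/
theorem max_selfish_volume_eq_zero_reduced_cost_flow {E : Type*} [Fintype E]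
    (l : E → ℝ → ℝ)
    (hl0 : ∀ e x, 0 ≤ l e x)
    (hlstrict : ∀ e, StrictMono (l e))
    (hldiff : ∀ e, Differentiable ℝ (l e))
    (hconv : ∀ e, ConvexOn ℝ (Set.Ici 0) (fun x => l e x * x))
    (r : ℝ) (hr : 0 < r)
    (f : E → ℝ) (hf0 : ∀ e, 0 ≤ f e) (hfr : ∑ e, f e = r)
    (hfSO : ∀ h : E → ℝ, (∀ e, 0 ≤ h e) → ∑ e, h e = r →
      ∑ e, l e (f e) * f e ≤ ∑ e, l e (h e) * h e)
    -- f is the unique system-optimal flow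
    (hfuniq : ∀ g : E → ℝ, (∀ e, 0 ≤ g e) → ∑ e, g e = r →
      (∀ h : E → ℝ, (∀ e, 0 ≤ h e) → ∑ e, h e = r →
        ∑ e, l e (g e) * g e ≤ ∑ e, l e (h e) * h e) → g = f) :
    IsGreatest
      {u : ℝ | ∃ fUE fC : E → ℝ,
        (∀ e, 0 ≤ fUE e) ∧ (∀ e, 0 ≤ fC e) ∧
        (∀ e, fUE e + fC e = f e) ∧
        (∑ e, fUE e) = u ∧
        -- self-interested flow only on minimal-latency links
        (∀ e, 0 < fUE e → ∀ e', l e (f e) ≤ l e' (f e'))}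
      (∑ e ∈ Finset.univ.filter (fun e =>
          (∀ e', l e (f e) ≤ l e' (f e')) ∧
          (∀ e', l e (f e) + f e * deriv (l e) (f e)
            ≤ l e' (f e') + f e' * deriv (l e') (f e'))),
        f e) :=
  max_selfish_volume_eq_zero_reduced_cost_flow_general l hldiff r f hf0 hfr hfSO
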